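/- arXiv:2212.00918 — 3 statements merged into one kernel-verified Lean document; each statement's English description precedes it below -/
import Mathlib

section
/- Let k, l, a and b be positive integers with max{a, b} ≥ 2. Then every positive rational number can be written in the form φ(k·m^a)/φ(l·n^b) with m, n positive integers if and only if gcd(a, b) = 1 or (a, b, k, l) = (2, 2, 1, 1). -/
/-!
Write the positive rational as `c / d`. If `gcd(a, b) = 1`, Bézout exponents give `m, n` with
`B m^a = A n^b` for `A = c l`, `B = d k`, where `m` and `n` contain every prime of `c d k l`. Then
`k m^a` and `l n^b` have the same prime factors, so `φ(k m^a) / φ(l n^b) = k m^a / (l n^b) = c / d`.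
For `a = b = 2` and `k = l = 1`, induct on a bound for the primes of `c d`, splitting off the powers
of the top prime `p`: up to the common power, an even power `p^(2u)` is `φ(p^(2u+2)) / φ(p^2)` and
an odd power `p^(2u+1)` is `φ(p^(2u+2)) / (p - 1)`, with `p - 1` passed on to the smaller primes.

Conversely, `v_π(φ N) = (v_π N - 1) + ∑_{q ∣ N} v_π(q - 1)`, and the sum only involves primes
`q > π`. Let `d φ(k m^a) = c φ(l n^b)` with all primes of `c d k l` at most `π`. At the largest
prime `q > π` where `k m^a` and `l n^b` had different valuations, comparing `v_q` of both sides
would give equal valuations, since `a, b ≥ 2` excludes valuation `1`; so there is no such `q`, and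
comparing `v_π` gives `v_π(d) + (v_π(k m^a) - 1) = v_π(c) + (v_π(l n^b) - 1)`. With
`c / d = π^(±1)` for a large prime `π` this forces `a = b = 2` when `gcd(a, b) > 1`, and then a
parity argument at the largest prime of `k l` forces `k = l = 1`.
-/

open Nat

theorem forall_pos_rat_iff {P : ℚ → Prop} :
    (∀ r : ℚ, 0 < r → P r) ↔ ∀ c d : ℕ, 0 < c → 0 < d → P (c / d) := by
  refine ⟨fun h c d hc hd => h _ (by positivity), fun h r hr => ?_⟩
  have hnum := Rat.num_pos.mpr hr
  have hcast : ((r.num.toNat : ℕ) : ℚ) = r.num := by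
    exact_mod_cast Int.toNat_of_nonneg hnum.le
  simpa only [hcast, Rat.num_div_den] using h r.num.toNat r.den (by omega) r.pos

theorem forall_pos_rat_eq_totient_div_iff {k l a b : ℕ} (hl : 0 < l) :
    (∀ r : ℚ, 0 < r → ∃ m n : ℕ, 0 < m ∧ 0 < n ∧
        r = (φ (k * m ^ a) : ℚ) / (φ (l * n ^ b) : ℚ)) ↔
      ∀ c d : ℕ, 0 < c → 0 < d → ∃ m n, 0 < m ∧ 0 < n ∧ d * φ (k * m ^ a) = c * φ (l * n ^ b) := by
  rw [forall_pos_rat_iff]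
  refine forall₄_congr fun c d _ hd => exists₂_congr fun m n =>
    and_congr_right fun _ => and_congr_right fun hn => ?_
  rw [div_eq_div_iff (by positivity) (Nat.cast_ne_zero.mpr (totient_pos.mpr (by positivity)).ne')]
  norm_cast
  rw [mul_comm (φ _) d, eq_comm]

theorem totient_mul_eq_of_primeFactors_eq {K L : ℕ} (h : K.primeFactors = L.primeFactors) :
    φ K * L = φ L * K := by
  have hK := totient_mul_prod_primeFactors K
  have hL := totient_mul_prod_primeFactors L
  rw [h] at hK
  have hpos : 0 < ∏ p ∈ L.primeFactors, p := Finset.prod_pos fun p hp => pos_of_mem_primeFactors hp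
  refine Nat.eq_of_mul_eq_mul_right hpos ?_
  calc φ K * L * ∏ p ∈ L.primeFactors, p = L * (K * ∏ p ∈ L.primeFactors, (p - 1)) := by
        rw [← hK]; ring
    _ = K * (φ L * ∏ p ∈ L.primeFactors, p) := by rw [hL]; ring
    _ = φ L * K * ∏ p ∈ L.primeFactors, p := by ring

theorem exists_mul_eq_mul_add_one {a b : ℕ} (ha : 0 < a) (hab : Coprime a b) :
    ∃ x y, a * x = b * y + 1 := by
  obtain rfl | rfl | hb : b = 0 ∨ b = 1 ∨ 1 < b := by omega
  · exact ⟨1, 0, by simpa using hab⟩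
  · exact ⟨1, a - 1, by omega⟩
  · obtain ⟨x, -, hx⟩ := exists_mul_mod_eq_one_of_coprime hab hb
    exact ⟨x, a * x / b, by rw [← hx, Nat.div_add_mod]⟩

theorem exists_mul_pow_eq_mul_pow {a b : ℕ} (ha : 0 < a) (hb : 0 < b) (hab : Coprime a b)
    {A B : ℕ} (hA : 0 < A) (hB : 0 < B) :
    ∃ m n, 0 < m ∧ 0 < n ∧ m.primeFactors = (A * B).primeFactors ∧
      n.primeFactors = (A * B).primeFactors ∧ B * m ^ a = A * n ^ b := by
  obtain ⟨x, y, hxy⟩ := exists_mul_eq_mul_add_one ha hab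
  obtain ⟨x', y', hxy'⟩ := exists_mul_eq_mul_add_one hb hab.symm
  refine ⟨A ^ (x + b) * B ^ (y' + b), A ^ (y + a) * B ^ (x' + a), by positivity, by positivity,
    ?_, ?_, ?_⟩
  · rw [primeFactors_mul (by positivity) (by positivity), primeFactors_pow _ (by omega),
      primeFactors_pow _ (by omega), primeFactors_mul hA.ne' hB.ne']
  · rw [primeFactors_mul (by positivity) (by positivity), primeFactors_pow _ (by omega),
      primeFactors_pow _ (by omega), primeFactors_mul hA.ne' hB.ne']
  · calc B * (A ^ (x + b) * B ^ (y' + b)) ^ a = A ^ (a * x + a * b) * B ^ (a * y' + 1 + a * b) := by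
          ring
      _ = A * (A ^ (y + a) * B ^ (x' + a)) ^ b := by rw [hxy, ← hxy']; ring

theorem exists_mul_totient_eq_of_coprime {k l a b : ℕ} (hk : 0 < k) (hl : 0 < l)
    (ha : 0 < a) (hb : 0 < b) (hab : Coprime a b) {c d : ℕ} (hc : 0 < c) (hd : 0 < d) :
    ∃ m n, 0 < m ∧ 0 < n ∧ d * φ (k * m ^ a) = c * φ (l * n ^ b) := by
  obtain ⟨m, n, hm, hn, hpm, hpn, heq⟩ :=
    exists_mul_pow_eq_mul_pow ha hb hab (mul_pos hc hl) (mul_pos hd hk)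
  have hpf : (k * m ^ a).primeFactors = (l * n ^ b).primeFactors := by
    rw [primeFactors_mul hk.ne' (by positivity), primeFactors_mul hl.ne' (by positivity),
      primeFactors_pow _ ha.ne', primeFactors_pow _ hb.ne', hpm, hpn,
      primeFactors_mul (by positivity) (by positivity), primeFactors_mul hc.ne' hl.ne',
      primeFactors_mul hd.ne' hk.ne']
    ext; simp only [Finset.mem_union]; tauto
  refine ⟨m, n, hm, hn, Nat.eq_of_mul_eq_mul_right (show 0 < l * n ^ b by positivity) ?_⟩
  calc d * φ (k * m ^ a) * (l * n ^ b) = φ (l * n ^ b) * (d * k * m ^ a) := by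
        rw [mul_assoc, totient_mul_eq_of_primeFactors_eq hpf]; ring
    _ = c * φ (l * n ^ b) * (l * n ^ b) := by rw [heq]; ring

theorem totient_sq_prime_pow_mul {p m : ℕ} (hp : p.Prime) (hpm : Coprime p m) (e : ℕ) :
    φ ((p ^ (e + 1) * m) ^ 2) = p ^ (2 * e + 1) * (p - 1) * φ (m ^ 2) := by
  rw [mul_pow, ← pow_mul, totient_mul (hpm.pow _ _), totient_prime_pow hp (by omega)]
  congr 3
  omega

theorem exists_totient_sq_prime_pow_mul {p : ℕ} (hp : p.Prime)
    (ih : ∀ c ∈ p.smoothNumbers, ∀ d ∈ p.smoothNumbers,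
      ∃ m ∈ p.smoothNumbers, ∃ n ∈ p.smoothNumbers, d * φ (m ^ 2) = c * φ (n ^ 2))
    {c d : ℕ} (hc : c ∈ p.smoothNumbers) (hd : d ∈ p.smoothNumbers) (δ e : ℕ) :
    ∃ m ∈ (p + 1).smoothNumbers, ∃ n ∈ (p + 1).smoothNumbers,
      p ^ δ * d * φ (m ^ 2) = p ^ (δ + e) * c * φ (n ^ 2) := by
  have hp1 : p - 1 ∈ p.smoothNumbers := mem_smoothNumbers_of_lt (by have := hp.two_le; omega)
    (by have := hp.pos; omega)
  obtain ⟨u, rfl | rfl⟩ := e.even_or_odd'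
  · obtain ⟨m, hm, n, hn, h⟩ := ih c hc d hd
    refine ⟨p ^ (u + 1) * m, pow_mul_mem_smoothNumbers hp.ne_zero _ hm,
      p ^ (0 + 1) * n, pow_mul_mem_smoothNumbers hp.ne_zero _ hn, ?_⟩
    rw [totient_sq_prime_pow_mul hp (hp.smoothNumbers_coprime hm),
      totient_sq_prime_pow_mul hp (hp.smoothNumbers_coprime hn)]
    calc p ^ δ * d * (p ^ (2 * u + 1) * (p - 1) * φ (m ^ 2))
        = p ^ δ * p ^ (2 * u + 1) * (p - 1) * (d * φ (m ^ 2)) := by ring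
      _ = p ^ (δ + 2 * u) * c * (p ^ (2 * 0 + 1) * (p - 1) * φ (n ^ 2)) := by rw [h]; ring
  · obtain ⟨m, hm, n, hn, h⟩ := ih c hc (d * (p - 1)) (mul_mem_smoothNumbers hd hp1)
    refine ⟨p ^ (u + 1) * m, pow_mul_mem_smoothNumbers hp.ne_zero _ hm,
      n, smoothNumbers_mono p.le_succ hn, ?_⟩
    rw [totient_sq_prime_pow_mul hp (hp.smoothNumbers_coprime hm)]
    calc p ^ δ * d * (p ^ (2 * u + 1) * (p - 1) * φ (m ^ 2))
        = p ^ δ * p ^ (2 * u + 1) * (d * (p - 1) * φ (m ^ 2)) := by ring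
      _ = p ^ (δ + (2 * u + 1)) * c * φ (n ^ 2) := by rw [h]; ring

theorem exists_mul_totient_sq_eq (N : ℕ) :
    ∀ c ∈ N.smoothNumbers, ∀ d ∈ N.smoothNumbers,
      ∃ m ∈ N.smoothNumbers, ∃ n ∈ N.smoothNumbers, d * φ (m ^ 2) = c * φ (n ^ 2) := by
  induction N with
  | zero =>
    simp only [smoothNumbers_zero, Set.mem_singleton_iff]
    rintro c rfl d rfl
    exact ⟨1, rfl, 1, rfl, rfl⟩
  | succ p ih =>
    by_cases hp : p.Prime
    · intro c hc d hd
      obtain ⟨⟨γ, c₀, hc₀⟩, hγ⟩ := (equivProdNatSmoothNumbers hp).surjective ⟨c, hc⟩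
      obtain ⟨⟨δ, d₀, hd₀⟩, hδ⟩ := (equivProdNatSmoothNumbers hp).surjective ⟨d, hd⟩
      obtain rfl : p ^ γ * c₀ = c := congrArg Subtype.val hγ
      obtain rfl : p ^ δ * d₀ = d := congrArg Subtype.val hδ
      rcases le_total δ γ with h | h
      · obtain ⟨e, rfl⟩ := Nat.exists_eq_add_of_le h
        exact exists_totient_sq_prime_pow_mul hp ih hc₀ hd₀ δ e
      · obtain ⟨e, rfl⟩ := Nat.exists_eq_add_of_le h
        obtain ⟨m, hm, n, hn, heq⟩ := exists_totient_sq_prime_pow_mul hp ih hd₀ hc₀ γ e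
        exact ⟨n, hn, m, hm, heq.symm⟩
    · rwa [smoothNumbers_succ hp]

theorem exists_mul_totient_sq_eq_of_pos {c d : ℕ} (hc : 0 < c) (hd : 0 < d) :
    ∃ m n, 0 < m ∧ 0 < n ∧ d * φ (m ^ 2) = c * φ (n ^ 2) := by
  obtain ⟨m, hm, n, hn, h⟩ := exists_mul_totient_sq_eq (c + d + 1)
    c (mem_smoothNumbers_of_lt hc (by omega)) d (mem_smoothNumbers_of_lt hd (by omega))
  exact ⟨m, n, pos_of_ne_zero (ne_zero_of_mem_smoothNumbers hm),
    pos_of_ne_zero (ne_zero_of_mem_smoothNumbers hn), h⟩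

theorem factorization_totient_apply {N : ℕ} (hN : N ≠ 0) (π : ℕ) :
    (φ N).factorization π =
      (N.factorization π - 1) + ∑ q ∈ N.primeFactors, (q - 1).factorization π := by
  have hne : ∀ q ∈ N.primeFactors, q ^ (N.factorization q - 1) * (q - 1) ≠ 0 := fun q hq =>
    have := (prime_of_mem_primeFactors hq).two_le
    mul_ne_zero (pow_ne_zero _ (by omega)) (by omega)
  have hterm : ∀ q ∈ N.primeFactors, (q ^ (N.factorization q - 1) * (q - 1)).factorization π
      = (if q = π then N.factorization q - 1 else 0) + (q - 1).factorization π := by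
    intro q hq
    have hqp := prime_of_mem_primeFactors hq
    rw [Nat.factorization_mul (pow_ne_zero _ hqp.ne_zero) (by have := hqp.two_le; omega),
      Finsupp.add_apply, hqp.factorization_pow, Finsupp.single_apply]
  rw [totient_eq_prod_factorization hN, Finsupp.prod, Nat.support_factorization,
    factorization_prod hne, Finsupp.finsetSum_apply, Finset.sum_congr rfl hterm,
    Finset.sum_add_distrib, Finset.sum_ite_eq']
  split_ifs with hπ
  · rfl
  · rw [← Nat.support_factorization, Finsupp.notMem_support_iff] at hπ
    simp [hπ]

/-- A term is nonzero only if `π ∣ q - 1`, which forces `q > π`. -/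
theorem sum_primeFactors_factorization_sub_one_eq {K L π : ℕ}
    (h : ∀ q, π < q → K.factorization q = L.factorization q) :
    ∑ q ∈ K.primeFactors, (q - 1).factorization π =
      ∑ q ∈ L.primeFactors, (q - 1).factorization π := by
  have hfilter (N : ℕ) : ∑ q ∈ N.primeFactors with π < q, (q - 1).factorization π =
      ∑ q ∈ N.primeFactors, (q - 1).factorization π :=
    Finset.sum_filter_of_ne fun q hq hne => by
      by_contra! hle
      exact hne (factorization_eq_zero_of_lt (by have := (prime_of_mem_primeFactors hq).pos; omega))
  rw [← hfilter, ← hfilter]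
  congr 1
  ext q
  simp only [Finset.mem_filter, ← Nat.support_factorization, Finsupp.mem_support_iff]
  exact ⟨fun ⟨hK, hq⟩ => ⟨h q hq ▸ hK, hq⟩, fun ⟨hL, hq⟩ => ⟨(h q hq).symm ▸ hL, hq⟩⟩

theorem mem_primeFactors_mul_iff {K L q : ℕ} (hK : K ≠ 0) (hL : L ≠ 0) :
    q ∈ (K * L).primeFactors ↔ K.factorization q + L.factorization q ≠ 0 := by
  rw [← Nat.support_factorization, Finsupp.mem_support_iff, Nat.factorization_mul hK hL]
  rfl

theorem factorization_eq_of_mul_totient_eq {c d K L π : ℕ} (hc : c ≠ 0) (hd : d ≠ 0)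
    (hK : K ≠ 0) (hL : L ≠ 0) (heq : d * φ K = c * φ L)
    (h : ∀ q, π < q → K.factorization q = L.factorization q) :
    d.factorization π + (K.factorization π - 1) = c.factorization π + (L.factorization π - 1) := by
  have := congrArg (·.factorization π) heq
  simp only [Nat.factorization_mul hd (totient_pos.mpr (pos_of_ne_zero hK)).ne',
    Nat.factorization_mul hc (totient_pos.mpr (pos_of_ne_zero hL)).ne', Finsupp.add_apply,
    factorization_totient_apply hK, factorization_totient_apply hL,
    sum_primeFactors_factorization_sub_one_eq h] at this
  omega

theorem factorization_eq_of_mul_totient_eq_of_gt {c d K L P : ℕ} (hc : c ≠ 0) (hd : d ≠ 0)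
    (hK : K ≠ 0) (hL : L ≠ 0) (heq : d * φ K = c * φ L)
    (hcd : ∀ q, P < q → c.factorization q = d.factorization q)
    (hK1 : ∀ q, P < q → K.factorization q ≠ 1) (hL1 : ∀ q, P < q → L.factorization q ≠ 1) :
    ∀ q, P < q → K.factorization q = L.factorization q := by
  by_contra! hbad
  set bad := {q ∈ (K * L).primeFactors | P < q ∧ K.factorization q ≠ L.factorization q}
  have hmem : ∀ q, P < q → K.factorization q ≠ L.factorization q → q ∈ bad := by
    intro q hq hne
    exact Finset.mem_filter.mpr ⟨(mem_primeFactors_mul_iff hK hL).mpr (by omega), hq, hne⟩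
  obtain ⟨q, hqP, hq⟩ := hbad
  obtain ⟨q, hqbad, hmax⟩ := bad.exists_max_image id ⟨q, hmem q hqP hq⟩
  obtain ⟨-, hqP, hq⟩ := Finset.mem_filter.mp hqbad
  have := factorization_eq_of_mul_totient_eq (π := q) hc hd hK hL heq fun q' hq' => by
    by_contra hne
    exact absurd (hmax q' (hmem q' (by omega) hne)) (by simp only [id]; omega)
  have := hcd q hqP
  have := hK1 q hqP
  have := hL1 q hqP
  omega

theorem factorization_mul_pow_apply {x y : ℕ} (hx : x ≠ 0) (hy : y ≠ 0) (z q : ℕ) :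
    (x * y ^ z).factorization q = x.factorization q + z * y.factorization q := by
  simp [Nat.factorization_mul hx (pow_ne_zero z hy), Nat.factorization_pow]

theorem factorization_mul_pow_ne_one {x y z q : ℕ} (hx : x ≠ 0) (hy : y ≠ 0) (hz : 2 ≤ z)
    (hxq : x.factorization q = 0) : (x * y ^ z).factorization q ≠ 1 := by
  rw [factorization_mul_pow_apply hx hy, hxq, zero_add]
  intro h
  have := Nat.eq_one_of_mul_eq_one_right h
  omega

theorem exists_factorization_eq_of_forall_mul_totient_eq {k l a b π : ℕ} (hk : 0 < k)
    (hl : 0 < l) (ha : 2 ≤ a) (hb : 2 ≤ b) (hπ : π.Prime)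
    (hkπ : ∀ q, π < q → k.factorization q = 0) (hlπ : ∀ q, π < q → l.factorization q = 0)
    (H : ∀ c d, 0 < c → 0 < d → ∃ m n, 0 < m ∧ 0 < n ∧ d * φ (k * m ^ a) = c * φ (l * n ^ b))
    (j e : ℕ) :
    ∃ s t, e + (k.factorization π + a * s - 1) = j + (l.factorization π + b * t - 1) := by
  obtain ⟨m, n, hm, hn, heq⟩ := H (π ^ j) (π ^ e) (pow_pos hπ.pos j) (pow_pos hπ.pos e)
  have hpow (i q : ℕ) : (π ^ i).factorization q = if π = q then i else 0 := by
    rw [hπ.factorization_pow, Finsupp.single_apply]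
  have hπj := (pow_pos hπ.pos j).ne'
  have hπe := (pow_pos hπ.pos e).ne'
  have habove := factorization_eq_of_mul_totient_eq_of_gt (P := π) hπj hπe
    (by positivity) (by positivity) heq
    (fun q hq => by rw [hpow, hpow, if_neg hq.ne, if_neg hq.ne])
    (fun q hq => factorization_mul_pow_ne_one hk.ne' hm.ne' ha (hkπ q hq))
    (fun q hq => factorization_mul_pow_ne_one hl.ne' hn.ne' hb (hlπ q hq))
  have := factorization_eq_of_mul_totient_eq hπj hπe (by positivity) (by positivity) heq habove
  rw [hpow, hpow, if_pos rfl, if_pos rfl, factorization_mul_pow_apply hk.ne' hm.ne',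
    factorization_mul_pow_apply hl.ne' hn.ne'] at this
  exact ⟨m.factorization π, n.factorization π, this⟩

theorem factorization_eq_zero_of_forall_primeFactors_le {k l π : ℕ} (hk : k ≠ 0) (hl : l ≠ 0)
    (h : ∀ q ∈ (k * l).primeFactors, q ≤ π) (q : ℕ) (hq : π < q) :
    k.factorization q = 0 ∧ l.factorization q = 0 := by
  by_contra! hne
  have := h q ((mem_primeFactors_mul_iff hk hl).mpr (by omega))
  omega

theorem eq_two_of_mul_sub_one_eq {a b s t : ℕ} (hab : 1 < Nat.gcd a b)
    (h : a * s - 1 = 1 + (b * t - 1)) : a = 2 := by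
  rcases Nat.eq_zero_or_pos (b * t) with hbt | hbt
  · have has : a * s = 2 := by omega
    have ha2 : a ≤ 2 := Nat.le_of_dvd two_pos (Dvd.intro s has)
    have := hab.trans_le (Nat.gcd_le_left b (Nat.pos_of_ne_zero fun h0 => by simp [h0] at has))
    omega
  · have has : a * s = b * t + 1 := by omega
    have : Nat.gcd a b ∣ 1 := (Nat.dvd_add_right (dvd_mul_of_dvd_left (Nat.gcd_dvd_right a b) t)).mp
      (has ▸ dvd_mul_of_dvd_left (Nat.gcd_dvd_left a b) s)
    have := Nat.le_of_dvd one_pos this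
    omega

theorem eq_two_of_forall_mul_totient_eq {k l a b : ℕ} (hk : 0 < k) (hl : 0 < l)
    (ha : 0 < a) (hb : 0 < b) (hab : 1 < Nat.gcd a b)
    (H : ∀ c d, 0 < c → 0 < d → ∃ m n, 0 < m ∧ 0 < n ∧ d * φ (k * m ^ a) = c * φ (l * n ^ b)) :
    a = 2 ∧ b = 2 := by
  have ha2 : 2 ≤ a := hab.trans_le (Nat.gcd_le_left b ha)
  have hb2 : 2 ≤ b := hab.trans_le (Nat.gcd_le_right a hb)
  obtain ⟨P, hklP, hP⟩ := exists_infinite_primes (k * l + 1)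
  have hvanish := factorization_eq_zero_of_forall_primeFactors_le hk.ne' hl.ne'
    (fun q hq => le_of_mem_primeFactors hq)
  have rep := exists_factorization_eq_of_forall_mul_totient_eq hk hl ha2 hb2 hP
    (fun q hq => (hvanish q (by omega)).1) (fun q hq => (hvanish q (by omega)).2) H
  obtain ⟨s, t, h⟩ := rep 1 0
  obtain ⟨s', t', h'⟩ := rep 0 1
  rw [(hvanish P (by omega)).1, (hvanish P (by omega)).2] at h h'
  exact ⟨eq_two_of_mul_sub_one_eq (s := s) (t := t) hab (by omega),
    eq_two_of_mul_sub_one_eq (s := t') (t := s') (by rwa [Nat.gcd_comm]) (by omega)⟩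

/-- If `α, β ≥ 1` the two sides have opposite parities; if `β = 0` the right side is `j` plus `0` or
an odd number, which the left side avoids by being `j` plus an even number `≥ 2`. -/
theorem exists_forall_add_sub_one_ne {α β : ℕ} (h : α ≠ 0 ∨ β ≠ 0) :
    ∃ j e, ∀ s t, e + (α + 2 * s - 1) ≠ j + (β + 2 * t - 1) := by
  rcases Nat.eq_zero_or_pos α with rfl | hα
  · exact ⟨β + 3, 0, fun s t => by omega⟩
  rcases Nat.eq_zero_or_pos β with rfl | hβ
  · exact ⟨0, α + 3, fun s t => by omega⟩
  · exact ⟨α + 1, β, fun s t => by omega⟩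

theorem eq_one_of_forall_mul_totient_sq_eq {k l : ℕ} (hk : 0 < k) (hl : 0 < l)
    (H : ∀ c d, 0 < c → 0 < d → ∃ m n, 0 < m ∧ 0 < n ∧ d * φ (k * m ^ 2) = c * φ (l * n ^ 2)) :
    k = 1 ∧ l = 1 := by
  by_contra hkl
  have hkl1 : 1 < k * l := Nat.one_lt_mul_iff.mpr ⟨hk, hl, by omega⟩
  obtain ⟨π, hπ, hmax⟩ := (k * l).primeFactors.exists_max_image id (nonempty_primeFactors.mpr hkl1)
  have hvanish := factorization_eq_zero_of_forall_primeFactors_le hk.ne' hl.ne' hmax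
  obtain ⟨j, e, hje⟩ := exists_forall_add_sub_one_ne (α := k.factorization π)
    (β := l.factorization π) (by have := (mem_primeFactors_mul_iff hk.ne' hl.ne').mp hπ; omega)
  obtain ⟨s, t, h⟩ := exists_factorization_eq_of_forall_mul_totient_eq hk hl le_rfl le_rfl
    (prime_of_mem_primeFactors hπ) (fun q hq => (hvanish q hq).1) (fun q hq => (hvanish q hq).2)
    H j e
  exact hje s t h

theorem stmt_2_general (k l a b : ℕ) (hk : 0 < k) (hl : 0 < l) (ha : 0 < a) (hb : 0 < b) :
    (∀ r : ℚ, 0 < r → ∃ m n : ℕ, 0 < m ∧ 0 < n ∧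
        r = (Nat.totient (k * m ^ a) : ℚ) / (Nat.totient (l * n ^ b) : ℚ)) ↔
      (Nat.gcd a b = 1 ∨ (a = 2 ∧ b = 2 ∧ k = 1 ∧ l = 1)) := by
  rw [forall_pos_rat_eq_totient_div_iff hl]
  refine ⟨fun H => or_iff_not_imp_left.mpr fun hab => ?_, ?_⟩
  · have hab : 1 < Nat.gcd a b := by have := Nat.gcd_pos_of_pos_left b ha; omega
    obtain ⟨rfl, rfl⟩ := eq_two_of_forall_mul_totient_eq hk hl ha hb hab H
    exact ⟨rfl, rfl, eq_one_of_forall_mul_totient_sq_eq hk hl H⟩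
  rintro (hab | ⟨rfl, rfl, rfl, rfl⟩) c d hc hd
  · exact exists_mul_totient_eq_of_coprime hk hl ha hb hab hc hd
  · simpa only [one_mul] using exists_mul_totient_sq_eq_of_pos hc hd

theorem stmt_2 (k l a b : ℕ) (hk : 0 < k) (hl : 0 < l) (ha : 0 < a) (hb : 0 < b)
    (hmax : 2 ≤ max a b) :
    (∀ r : ℚ, 0 < r → ∃ m n : ℕ, 0 < m ∧ 0 < n ∧
        r = (Nat.totient (k * m ^ a) : ℚ) / (Nat.totient (l * n ^ b) : ℚ)) ↔
      (Nat.gcd a b = 1 ∨ (a = 2 ∧ b = 2 ∧ k = 1 ∧ l = 1)) :=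
  stmt_2_general k l a b hk hl ha hb
end

section
/- Let k and l be positive integers with (k, l) ≠ (1, 1), let p = P(k·l) be the largest prime factor of k·l, and suppose p divides gcd(k, l). Then there are no positive integers m and n such that p^{|v_p(k) − v_p(l)| + 1} = φ(k·m^2)/φ(l·n^2), where v_p denotes the p-adic valuation. -/
/-!
Strip from `φ(k m²) = p^c φ(l n²)` the largest prime `Q` of `k m² · l n²` as long as `Q > p`.
Since `Q` is the largest prime, no prime factor `r` has `Q ∣ r - 1`, so `v_Q(φ N) = v_Q(N) - 1`
on both sides; as `Q ∤ k l`, the `Q`-adic valuations of both sides are even, hence equal, and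
`Q` can be cancelled by multiplicativity of `φ`. Once `p` is the largest prime, comparing
`p`-adic valuations gives `v_p(k m²) = c + v_p(l n²)`, which fails by parity since
`c = |v_p(k) - v_p(l)| + 1`.
-/

/-- The largest prime factor of `n`, with the convention that it is `1`
when `n` has no prime factors (in particular `P(1) = 1`). -/
def maxPrimeFac (n : ℕ) : ℕ := WithBot.unbotD 1 n.primeFactors.max

open scoped Nat

lemma maxPrimeFac_mem_primeFactors {N : ℕ} (hN : 1 < N) : maxPrimeFac N ∈ N.primeFactors := by
  obtain ⟨P, hP⟩ := Finset.max_of_nonempty (Nat.nonempty_primeFactors.mpr hN)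
  simpa [maxPrimeFac, hP] using Finset.mem_of_max hP

lemma le_maxPrimeFac {N r : ℕ} (hr : r ∈ N.primeFactors) : r ≤ maxPrimeFac N := by
  obtain ⟨P, hP⟩ := Finset.max_of_mem hr
  have hrP := Finset.le_max hr
  rw [hP] at hrP
  simpa [maxPrimeFac, hP] using hrP

lemma factorization_eq_zero_of_maxPrimeFac_lt {N q : ℕ} (hq : maxPrimeFac N < q) :
    N.factorization q = 0 := by
  refine Finsupp.notMem_support_iff.mp fun h => ?_
  rw [Nat.support_factorization] at h
  exact (le_maxPrimeFac h).not_gt hq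

lemma factorization_mul_sq {k m : ℕ} (hk : k ≠ 0) (hm : m ≠ 0) (q : ℕ) :
    (k * m ^ 2).factorization q = k.factorization q + 2 * m.factorization q := by
  simp [Nat.factorization_mul hk (pow_ne_zero 2 hm), Nat.factorization_pow]

lemma factorization_totient_of_not_dvd_sub_one {q N : ℕ} (hN : N ≠ 0)
    (h : ∀ r ∈ N.primeFactors, ¬ q ∣ r - 1) :
    (φ N).factorization q = N.factorization q - 1 := by
  have hfactor_ne : ∀ r ∈ N.primeFactors, r ^ (N.factorization r - 1) * (r - 1) ≠ 0 :=
    fun r hr => by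
      have := (Nat.prime_of_mem_primeFactors hr).two_le
      exact mul_ne_zero (pow_ne_zero _ (by omega)) (by omega)
  have hterm : ∀ r ∈ N.primeFactors,
      (r ^ (N.factorization r - 1) * (r - 1)).factorization q =
        if r = q then N.factorization q - 1 else 0 := by
    intro r hr
    have hrp := Nat.prime_of_mem_primeFactors hr
    have := hrp.two_le
    rw [Nat.factorization_mul (pow_ne_zero _ hrp.ne_zero) (by omega), Finsupp.add_apply,
      hrp.factorization_pow, Nat.factorization_eq_zero_of_not_dvd (h r hr),
      Finsupp.single_apply]
    by_cases hrq : r = q <;> simp [hrq]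
  rw [Nat.totient_eq_prod_factorization hN, Finsupp.prod, Nat.support_factorization,
    Nat.factorization_prod hfactor_ne, Finset.sum_apply', Finset.sum_congr rfl hterm,
    Finset.sum_ite_eq']
  split_ifs with hqN
  · rfl
  · rw [← Nat.support_factorization, Finsupp.notMem_support_iff] at hqN
    simp [hqN]

lemma factorization_totient_of_forall_le {q N : ℕ} (hN : N ≠ 0)
    (h : ∀ r ∈ N.primeFactors, r ≤ q) :
    (φ N).factorization q = N.factorization q - 1 :=
  factorization_totient_of_not_dvd_sub_one hN fun r hr hdvd => by
    have := (Nat.prime_of_mem_primeFactors hr).two_le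
    have := Nat.le_of_dvd (by omega) hdvd
    have := h r hr
    omega

lemma factorization_sub_one_of_totient_eq_mul {q a K L : ℕ} (ha : a ≠ 0)
    (hK : K ≠ 0) (hL : L ≠ 0) (hle : ∀ r ∈ (K * L).primeFactors, r ≤ q)
    (h : φ K = a * φ L) :
    K.factorization q - 1 = a.factorization q + (L.factorization q - 1) := by
  rw [Nat.primeFactors_mul hK hL] at hle
  rw [← factorization_totient_of_forall_le hK fun r hr => hle r (Finset.mem_union_left _ hr),
    ← factorization_totient_of_forall_le hL fun r hr => hle r (Finset.mem_union_right _ hr),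
    h, Nat.factorization_mul ha (Nat.totient_pos.mpr (Nat.pos_of_ne_zero hL)).ne']
  rfl

lemma totient_ordCompl_eq_mul {Q a K L : ℕ} (hQ : Q.Prime) (hK : K ≠ 0) (hL : L ≠ 0)
    (hKL : K.factorization Q = L.factorization Q) (h : φ K = a * φ L) :
    φ (ordCompl[Q] K) = a * φ (ordCompl[Q] L) := by
  have hsplit : ∀ N ≠ 0, φ N = φ (Q ^ N.factorization Q) * φ (ordCompl[Q] N) := fun N hN => by
    conv_lhs => rw [← Nat.ordProj_mul_ordCompl_eq_self N Q]
    exact Nat.totient_mul ((Nat.coprime_ordCompl hQ hN).pow_left _)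
  rw [hsplit K hK, hsplit L hL, mul_left_comm,
    show φ (Q ^ K.factorization Q) = φ (Q ^ L.factorization Q) by rw [hKL]] at h
  exact Nat.eq_of_mul_eq_mul_left (Nat.totient_pos.mpr (pow_pos hQ.pos _)) h

lemma totient_ne_pow_mul_totient_of_forall_le {p c K L : ℕ} (hp : p.Prime) (hK : K ≠ 0)
    (hL : L ≠ 0) (hpK : p ∣ K) (hpL : p ∣ L) (hle : ∀ r ∈ (K * L).primeFactors, r ≤ p)
    (hodd : Odd (c + K.factorization p + L.factorization p)) :
    φ K ≠ p ^ c * φ L := fun h => by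
  have hval := factorization_sub_one_of_totient_eq_mul (pow_ne_zero c hp.ne_zero) hK hL hle h
  rw [hp.factorization_pow, Finsupp.single_eq_same] at hval
  have := hp.factorization_pos_of_dvd hK hpK
  have := hp.factorization_pos_of_dvd hL hpL
  rw [Nat.odd_iff] at hodd
  omega

lemma factorization_eq_of_totient_eq_pow_mul {p c Q K L : ℕ} (hp : p.Prime) (hpQ : p ≠ Q)
    (hK : K ≠ 0) (hL : L ≠ 0) (hle : ∀ r ∈ (K * L).primeFactors, r ≤ Q)
    (hK_even : Even (K.factorization Q)) (hL_even : Even (L.factorization Q))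
    (h : φ K = p ^ c * φ L) :
    K.factorization Q = L.factorization Q := by
  have hval := factorization_sub_one_of_totient_eq_mul (pow_ne_zero c hp.ne_zero) hK hL hle h
  rw [hp.factorization_pow, Finsupp.single_eq_of_ne hpQ.symm, zero_add] at hval
  obtain ⟨x, hx⟩ := hK_even
  obtain ⟨y, hy⟩ := hL_even
  omega

theorem totient_ne_pow_mul_totient {p c : ℕ} (hp : p.Prime) {K L : ℕ} (hK : K ≠ 0) (hL : L ≠ 0)
    (hpK : p ∣ K) (hpL : p ∣ L)
    (heven : ∀ q, p < q → Even (K.factorization q) ∧ Even (L.factorization q))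
    (hodd : Odd (c + K.factorization p + L.factorization p)) :
    φ K ≠ p ^ c * φ L := by
  induction K using Nat.strong_induction_on generalizing L with
  | _ K ih =>
  have hpKL : p ∈ (K * L).primeFactors :=
    Nat.mem_primeFactors.mpr ⟨hp, dvd_mul_of_dvd_left hpK L, mul_ne_zero hK hL⟩
  set Q := maxPrimeFac (K * L)
  have hQ : Q ∈ (K * L).primeFactors :=
    maxPrimeFac_mem_primeFactors (hp.one_lt.trans_le (Nat.le_of_mem_primeFactors hpKL))
  have hQp := Nat.prime_of_mem_primeFactors hQ
  have hle : ∀ r ∈ (K * L).primeFactors, r ≤ Q := fun r hr => le_maxPrimeFac hr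
  rcases (le_maxPrimeFac hpKL).eq_or_lt with hpQ | hpQ
  · exact totient_ne_pow_mul_totient_of_forall_le hp hK hL hpK hpL (hpQ ▸ hle) hodd
  intro h
  have hQKL := factorization_eq_of_totient_eq_pow_mul hp hpQ.ne hK hL hle
    (heven Q hpQ).1 (heven Q hpQ).2 h
  have hQK : 0 < K.factorization Q := by
    rcases hQp.dvd_mul.mp (Nat.dvd_of_mem_primeFactors hQ) with hQK | hQL
    · exact hQp.factorization_pos_of_dvd hK hQK
    · exact hQKL ▸ hQp.factorization_pos_of_dvd hL hQL
  have hQ_not_dvd : ¬ Q ∣ p := fun hd => (Nat.le_of_dvd hp.pos hd).not_gt hpQ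
  have hfac_ne : ∀ N q, q ≠ Q → (ordCompl[Q] N).factorization q = N.factorization q :=
    fun N q hq => by rw [Nat.factorization_ordCompl, Finsupp.erase_ne hq]
  refine ih _ (Nat.div_lt_self (Nat.pos_of_ne_zero hK) (Nat.one_lt_pow hQK.ne' hQp.one_lt))
    (Nat.ordCompl_pos Q hK).ne' (Nat.ordCompl_pos Q hL).ne'
    (Nat.dvd_ordCompl_of_dvd_not_dvd hpK hQ_not_dvd)
    (Nat.dvd_ordCompl_of_dvd_not_dvd hpL hQ_not_dvd) (fun q hq => ?_) ?_
    (totient_ordCompl_eq_mul hQp hK hL hQKL h)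
  · by_cases hqQ : q = Q
    · simp [hqQ, Nat.factorization_ordCompl]
    · rw [hfac_ne K q hqQ, hfac_ne L q hqQ]
      exact heven q hq
  · rwa [hfac_ne K p hpQ.ne, hfac_ne L p hpQ.ne]

theorem stmt_5 (k l p : ℕ) (hk : 0 < k) (hl : 0 < l) (hkl : ¬ (k = 1 ∧ l = 1))
    (hp : p = maxPrimeFac (k * l)) (hdvd : p ∣ Nat.gcd k l) :
    ¬ ∃ m n : ℕ, 0 < m ∧ 0 < n ∧
      (p : ℚ) ^ (((padicValNat p k : ℤ) - (padicValNat p l : ℤ)).natAbs + 1) =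
        (Nat.totient (k * m ^ 2) : ℚ) / (Nat.totient (l * n ^ 2) : ℚ) := by
  rintro ⟨m, n, hm, hn, heq⟩
  have hkl1 : 1 < k * l := by
    have : k * l ≠ 1 := fun h => hkl (mul_eq_one.mp h)
    have : k * l ≠ 0 := by positivity
    omega
  have hpp : p.Prime := hp ▸ Nat.prime_of_mem_primeFactors (maxPrimeFac_mem_primeFactors hkl1)
  have hpk : p ∣ k := hdvd.trans (Nat.gcd_dvd_left k l)
  have hpl : p ∣ l := hdvd.trans (Nat.gcd_dvd_right k l)
  have hkl_large : ∀ q, p < q → k.factorization q = 0 ∧ l.factorization q = 0 := fun q hq => by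
    have := factorization_eq_zero_of_maxPrimeFac_lt (hp ▸ hq)
    rw [Nat.factorization_mul hk.ne' hl.ne', Finsupp.add_apply] at this
    omega
  have hφ : (0 : ℚ) < φ (l * n ^ 2) := by exact_mod_cast Nat.totient_pos.mpr (by positivity)
  rw [eq_div_iff hφ.ne'] at heq
  refine totient_ne_pow_mul_totient (K := k * m ^ 2) (L := l * n ^ 2)
    (c := ((padicValNat p k : ℤ) - (padicValNat p l : ℤ)).natAbs + 1) hpp
    (by positivity) (by positivity)
    (dvd_mul_of_dvd_left hpk _) (dvd_mul_of_dvd_left hpl _) (fun q hq => ?_) ?_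
    (by exact_mod_cast heq.symm)
  · rw [factorization_mul_sq hk.ne' hm.ne', factorization_mul_sq hl.ne' hn.ne',
      (hkl_large q hq).1, (hkl_large q hq).2, zero_add, zero_add]
    exact ⟨even_two_mul _, even_two_mul _⟩
  · rw [factorization_mul_sq hk.ne' hm.ne', factorization_mul_sq hl.ne' hn.ne',
      Nat.factorization_def k hpp, Nat.factorization_def l hpp, Nat.odd_iff]
    omega
end

section
/- Let k, l, a and b be positive integers with gcd(a, b) > 1, and let r be a positive rational number. If r = φ(k·m^a)/φ(l·n^b) and r = φ(k·m'^a)/φ(l·n'^b) are both proper representations of r (with m, n, m', n' positive integers), then m = m' and n = n'. -/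
/-!
Induct on the largest prime `P` dividing `m n m' n'`. When all prime factors of `m` are at most
`P`, the primes below `P` and their predecessors are prime to `P`, so
`v_P(φ(k m^a)) = v_P(φ k) + a v_P(m) - [P ∣ m, P ∤ k]`. Comparing `P`-adic valuations in
`φ(k m^a) φ(l n'^b) = φ(k m'^a) φ(l n^b)` relates `a v_P(m)`, `b v_P(n)` and four correction
terms in `{0, 1}`. Since `gcd(a, b) ≥ 2`, `v_P(m) > v_P(m')` would force
`a (v_P(m) - v_P(m')) = b (v_P(n) - v_P(n'))` with balanced corrections, and then
`d₁ = P^(v_P(m) - v_P(m'))`, `d₂ = P^(v_P(n) - v_P(n'))` show that `(m, n)` is not proper.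
So the `P`-parts of `m, m'` and of `n, n'` agree; cancelling them leaves the same equation for the
`P`-free parts, which are again proper.
-/

/-- A representation `r = φ(k·m^a)/φ(l·n^b)` is *proper* if there are no positive
integers `d₁ > 1`, `d₂`, `m₁`, `n₁` with `m = m₁·d₁`, `n = n₁·d₂`, `d₁^a = d₂^b`,
such that every prime `p ∣ d₁·d₂` satisfies `p ∣ gcd(k·m₁, l·n₁)` or
`gcd(p, k·l·m₁·n₁) = 1`. -/
def IsProperRep (k l a b m n : ℕ) : Prop :=
  ¬ ∃ d₁ d₂ m₁ n₁ : ℕ,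
      1 < d₁ ∧ 0 < d₂ ∧ 0 < m₁ ∧ 0 < n₁ ∧
      m = m₁ * d₁ ∧ n = n₁ * d₂ ∧ d₁ ^ a = d₂ ^ b ∧
      ∀ p : ℕ, p.Prime → p ∣ d₁ * d₂ →
        p ∣ Nat.gcd (k * m₁) (l * n₁) ∨ Nat.Coprime p (k * l * m₁ * n₁)

namespace Nat

lemma eq_of_mul_add_eq_mul_add {b x y s t : ℕ} (hs : s < b) (ht : t < b)
    (h : b * x + s = b * y + t) : x = y := by
  have := congrArg (· / b) h
  simpa [Nat.mul_add_div (by omega : 0 < b), Nat.div_eq_of_lt hs, Nat.div_eq_of_lt ht] using this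

lemma factorization_totient_prime_mul {P p k : ℕ} (hp : p.Prime) (hpP : p < P) (hk : k ≠ 0) :
    (φ (p * k)).factorization P = (φ k).factorization P := by
  have hφk : φ k ≠ 0 := (totient_pos.mpr (pos_of_ne_zero hk)).ne'
  by_cases hpk : p ∣ k
  · rw [totient_mul_of_prime_of_dvd hp hpk, factorization_mul hp.ne_zero hφk, Finsupp.add_apply,
      factorization_eq_zero_of_lt hpP, zero_add]
  · rw [totient_mul_of_prime_of_not_dvd hp hpk,
      factorization_mul (Nat.sub_ne_zero_of_lt hp.one_lt) hφk, Finsupp.add_apply,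
      factorization_eq_zero_of_lt (by omega : p - 1 < P), zero_add]

lemma factorization_totient_mul_of_mem_smoothNumbers {P k m : ℕ} (hk : k ≠ 0)
    (hm : m ∈ smoothNumbers P) : (φ (k * m)).factorization P = (φ k).factorization P := by
  induction m using induction_on_primes generalizing k with
  | zero => exact absurd rfl hm.1
  | one => rw [mul_one]
  | prime_mul p m hp ih =>
    have hpP : p < P := mem_smoothNumbers'.mp hm p hp (dvd_mul_right p m)
    rw [← mul_assoc,
      ih (mul_ne_zero hk hp.ne_zero) (mem_smoothNumbers_of_dvd hm (dvd_mul_left m p)), mul_comm,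
      factorization_totient_prime_mul hp hpP hk]

lemma totient_mul_prime_pow {P : ℕ} (hP : P.Prime) (u e : ℕ) :
    φ (u * P ^ e) = φ u * if P ∣ u then P ^ e else φ (P ^ e) := by
  split_ifs with hPu
  · induction e with
    | zero => simp
    | succ e ih =>
      rw [pow_succ', mul_left_comm, totient_mul_of_prime_of_dvd hP (hPu.mul_right _), ih]
      ring
  · exact totient_mul ((coprime_comm.mp (hP.coprime_iff_not_dvd.mpr hPu)).pow_right e)

lemma totient_mul_pow_prime_pow_mul {P k m a : ℕ} (hP : P.Prime) (hm : ¬ P ∣ m) (α : ℕ) :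
    φ (k * (P ^ α * m) ^ a) = φ (k * m ^ a) *
      if P ∣ k then P ^ (α * a) else φ (P ^ (α * a)) := by
  have hPk : P ∣ k * m ^ a ↔ P ∣ k :=
    hP.dvd_mul.trans (or_iff_left fun h => hm (hP.dvd_of_dvd_pow h))
  rw [mul_pow, ← pow_mul, mul_comm (P ^ _), ← mul_assoc, totient_mul_prime_pow hP]
  simp only [hPk]

lemma ordCompl_mem_smoothNumbers {P m : ℕ} (hP : P.Prime) (hm : m ∈ smoothNumbers (P + 1)) :
    ordCompl[P] m ∈ smoothNumbers P := by
  refine mem_smoothNumbers'.mpr fun q hq hqm => lt_of_le_of_ne ?_ ?_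
  · exact Nat.lt_succ_iff.mp (mem_smoothNumbers'.mp hm q hq (hqm.trans (ordCompl_dvd m P)))
  · rintro rfl; exact not_dvd_ordCompl hP hm.1 hqm

lemma factorization_totient_prime_pow {P : ℕ} (hP : P.Prime) (e : ℕ) :
    (φ (P ^ e)).factorization P = e - 1 := by
  cases e with
  | zero => simp
  | succ e =>
    rw [totient_prime_pow_succ hP, factorization_mul (pow_ne_zero e hP.ne_zero)
      (Nat.sub_ne_zero_of_lt hP.one_lt), Finsupp.add_apply, factorization_pow_self hP,
      factorization_eq_zero_of_lt (Nat.sub_lt hP.pos one_pos)]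
    rfl

lemma factorization_totient_mul_pow {P k m a : ℕ} (hP : P.Prime) (hk : k ≠ 0) (ha : 0 < a)
    (hm : m ∈ smoothNumbers (P + 1)) :
    (φ (k * m ^ a)).factorization P + (if 0 < m.factorization P ∧ ¬ P ∣ k then 1 else 0)
      = (φ k).factorization P + a * m.factorization P := by
  have hcompl : ordCompl[P] m ^ a ∈ smoothNumbers P :=
    mem_smoothNumbers'.mpr fun q hq hqm => mem_smoothNumbers'.mp
      (ordCompl_mem_smoothNumbers hP hm) q hq (hq.dvd_of_dvd_pow hqm)
  have hφ : φ (k * ordCompl[P] m ^ a) ≠ 0 :=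
    (totient_pos.mpr (pos_of_ne_zero (mul_ne_zero hk hcompl.1))).ne'
  have hφP : ∀ e, φ (P ^ e) ≠ 0 := fun e => (totient_pos.mpr (pow_pos hP.pos e)).ne'
  have hsplit := totient_mul_pow_prime_pow_mul (k := k) (a := a) hP (not_dvd_ordCompl hP hm.1)
    (m.factorization P)
  rw [ordProj_mul_ordCompl_eq_self] at hsplit
  rw [hsplit, factorization_mul hφ (by split_ifs <;> simp [hP.ne_zero, hφP]), Finsupp.add_apply,
    factorization_totient_mul_of_mem_smoothNumbers hk hcompl, mul_comm a]
  by_cases hPk : P ∣ k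
  · simp [hPk, hP.factorization_self]
  · simp only [hPk, if_false, not_false_eq_true, and_true, factorization_totient_prime_pow hP]
    split_ifs with hv
    · have := Nat.mul_pos hv ha
      omega
    · simp [Nat.eq_zero_of_not_pos hv]

lemma totient_mul_pow_eq_of_mul_prime_pow {P k l a b α β m₀ n₀ m₀' n₀' : ℕ} (hP : P.Prime)
    (hm₀ : ¬ P ∣ m₀) (hn₀ : ¬ P ∣ n₀) (hm₀' : ¬ P ∣ m₀') (hn₀' : ¬ P ∣ n₀')
    (hφ : φ (k * (P ^ α * m₀) ^ a) * φ (l * (P ^ β * n₀') ^ b)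
      = φ (k * (P ^ α * m₀') ^ a) * φ (l * (P ^ β * n₀) ^ b)) :
    φ (k * m₀ ^ a) * φ (l * n₀' ^ b) = φ (k * m₀' ^ a) * φ (l * n₀ ^ b) := by
  rw [totient_mul_pow_prime_pow_mul hP hm₀, totient_mul_pow_prime_pow_mul hP hn₀',
    totient_mul_pow_prime_pow_mul hP hm₀', totient_mul_pow_prime_pow_mul hP hn₀,
    mul_mul_mul_comm, mul_mul_mul_comm (φ (k * m₀' ^ a))] at hφ
  refine eq_of_mul_eq_mul_right (pos_of_ne_zero ?_) hφ
  split_ifs <;> simp [hP.ne_zero]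

lemma Prime.dvd_mul_div_pow_iff {P k m i j : ℕ} (hP : P.Prime) (hm : m ≠ 0)
    (hmi : m.factorization P = j + i) : P ∣ k * (m / P ^ i) ↔ P ∣ k ∨ 0 < j := by
  have hPi : P ^ i ∣ m := (hP.pow_dvd_iff_le_factorization hm).mpr (by omega)
  rw [hP.dvd_mul, hP.dvd_iff_one_le_factorization (div_ne_zero_iff_of_dvd hPi |>.mpr
    ⟨hm, pow_ne_zero i hP.ne_zero⟩), factorization_div hPi, Finsupp.tsub_apply,
    factorization_pow_self hP, hmi]
  omega

end Nat

-- `h` is the `P`-adic valuation identity of `Nat.factorization_totient_mul_pow`, with `K = P ∣ k`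
-- and `L = P ∣ l`.
lemma mul_sub_eq_mul_sub_of_add_ite_eq {a b α β α' β' : ℕ} {K L : Prop} [Decidable K]
    [Decidable L] (ha : 0 < a) (hb : 0 < b) (hab : 1 < Nat.gcd a b) (hlt : α' < α)
    (h : a * α + b * β' + (if 0 < α' ∧ ¬ K then 1 else 0) + (if 0 < β ∧ ¬ L then 1 else 0)
      = a * α' + b * β + (if 0 < α ∧ ¬ K then 1 else 0) + (if 0 < β' ∧ ¬ L then 1 else 0)) :
    β' < β ∧ a * (α - α') = b * (β - β') ∧ (K ∨ 0 < α' ↔ L ∨ 0 < β') := by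
  have ha2 : 2 ≤ a := hab.trans_le (Nat.le_of_dvd ha (Nat.gcd_dvd_left a b))
  have hb2 : 2 ≤ b := hab.trans_le (Nat.le_of_dvd hb (Nat.gcd_dvd_right a b))
  have hax : a ≤ a * (α - α') := Nat.le_mul_of_pos_right a (by omega)
  have hg : ((Nat.gcd a b : ℕ) : ℤ) ∣ (a : ℤ) * (α - α' : ℕ) - b * (β - β' : ℤ) :=
    dvd_sub (Dvd.dvd.mul_right (Int.natCast_dvd_natCast.mpr (Nat.gcd_dvd_left a b)) _)
      (Dvd.dvd.mul_right (Int.natCast_dvd_natCast.mpr (Nat.gcd_dvd_right a b)) _)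
  have hbal : (a : ℤ) * (α - α' : ℕ) - b * (β - β' : ℤ) = 0 := by
    have hbβ : β < β' → b * β + b ≤ b * β' := fun h => by nlinarith
    -- The corrections put the difference in `[-1, 2]`, as `α' < α`; and `2` would need
    -- `β = 0 < β'`, making it at least `a + b`.
    refine Int.eq_zero_of_abs_lt_dvd hg ?_
    push_cast [Nat.cast_sub hlt.le]
    split_ifs at h <;> grind
  have hβ : β' < β := by
    by_contra! hβ
    nlinarith
  refine ⟨hβ, ?_, ?_⟩
  · zify [hβ.le]; linarith
  · push_cast [Nat.cast_sub hlt.le] at hbal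
    split_ifs at h <;> grind

section

open Nat (smoothNumbers)
open scoped Nat

variable {k l a b : ℕ}

lemma not_isProperRep_of_factorization {m n P i j α β : ℕ} (hP : P.Prime) (hm : m ≠ 0)
    (hn : n ≠ 0) (hi : 0 < i) (hmi : m.factorization P = α + i) (hnj : n.factorization P = β + j)
    (hij : a * i = b * j) (hkl : P ∣ k ∨ 0 < α ↔ P ∣ l ∨ 0 < β) :
    ¬ IsProperRep k l a b m n := by
  have hPi : P ^ i ∣ m := (hP.pow_dvd_iff_le_factorization hm).mpr (by omega)
  have hPj : P ^ j ∣ n := (hP.pow_dvd_iff_le_factorization hn).mpr (by omega)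
  have hkm := hP.dvd_mul_div_pow_iff (k := k) hm hmi
  have hln := hP.dvd_mul_div_pow_iff (k := l) hn hnj
  refine not_not_intro ⟨P ^ i, P ^ j, m / P ^ i, n / P ^ j, Nat.one_lt_pow hi.ne' hP.one_lt,
    pow_pos hP.pos j, Nat.div_pos (Nat.le_of_dvd (Nat.pos_of_ne_zero hm) hPi) (pow_pos hP.pos i),
    Nat.div_pos (Nat.le_of_dvd (Nat.pos_of_ne_zero hn) hPj) (pow_pos hP.pos j),
    (Nat.div_mul_cancel hPi).symm, (Nat.div_mul_cancel hPj).symm,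
    by rw [← pow_mul, ← pow_mul, mul_comm i, hij, mul_comm], fun p hp hpd => ?_⟩
  obtain rfl : p = P := (Nat.prime_dvd_prime_iff_eq hp hP).mp
    (hp.dvd_of_dvd_pow (by rwa [← pow_add] at hpd))
  by_cases hK : p ∣ k * (m / p ^ i)
  · exact Or.inl (Nat.dvd_gcd hK (hln.mpr (hkl.mp (hkm.mp hK))))
  · refine Or.inr (hp.coprime_iff_not_dvd.mpr fun h => ?_)
    rw [show k * l * (m / p ^ i) * (n / p ^ j) = k * (m / p ^ i) * (l * (n / p ^ j)) by ring,
      hp.dvd_mul] at h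
    exact h.elim hK fun h => hK (hkm.mpr (hkl.mpr (hln.mp h)))

lemma IsProperRep.of_mul {m n u v : ℕ} (hu : 0 < u) (hv : 0 < v)
    (huv : Nat.Coprime (m * n) (u * v)) (h : IsProperRep k l a b (m * u) (n * v)) :
    IsProperRep k l a b m n := by
  rintro ⟨d₁, d₂, m₁, n₁, hd₁, hd₂, hm₁, hn₁, rfl, rfl, hd, hprimes⟩
  refine h ⟨d₁, d₂, m₁ * u, n₁ * v, hd₁, hd₂, by positivity, by positivity, by ring, by ring, hd,
    fun p hp hpd => ?_⟩
  have hpuv : Nat.Coprime p (u * v) :=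
    huv.coprime_dvd_left (hpd.trans (mul_dvd_mul (dvd_mul_left d₁ m₁) (dvd_mul_left d₂ n₁)))
  rcases hprimes p hp hpd with h | h
  · have hkm : k * m₁ ∣ k * (m₁ * u) := mul_dvd_mul_left k (dvd_mul_right m₁ u)
    have hln : l * n₁ ∣ l * (n₁ * v) := mul_dvd_mul_left l (dvd_mul_right n₁ v)
    exact Or.inl (h.trans (Nat.dvd_gcd ((Nat.gcd_dvd_left _ _).trans hkm)
      ((Nat.gcd_dvd_right _ _).trans hln)))
  · right
    rw [show k * l * (m₁ * u) * (n₁ * v) = k * l * m₁ * n₁ * (u * v) by ring]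
    exact h.mul_right hpuv

lemma IsProperRep.ordCompl {m n P : ℕ} (hP : P.Prime) (hm : m ≠ 0) (hn : n ≠ 0)
    (h : IsProperRep k l a b m n) : IsProperRep k l a b (ordCompl[P] m) (ordCompl[P] n) := by
  refine IsProperRep.of_mul (Nat.ordProj_pos m P) (Nat.ordProj_pos n P) ?_ ?_
  · rw [← pow_add]
    refine Nat.Coprime.pow_right _ (Nat.coprime_comm.mp (hP.coprime_iff_not_dvd.mpr ?_))
    rw [hP.dvd_mul]
    exact not_or_intro (Nat.not_dvd_ordCompl hP hm) (Nat.not_dvd_ordCompl hP hn)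
  · rwa [mul_comm, Nat.ordProj_mul_ordCompl_eq_self, mul_comm, Nat.ordProj_mul_ordCompl_eq_self]

lemma factorization_le_of_isProperRep {m n P α' β' : ℕ} (hP : P.Prime) (ha : 0 < a)
    (hb : 0 < b) (hab : 1 < Nat.gcd a b) (hm : m ≠ 0) (hn : n ≠ 0)
    (h : IsProperRep k l a b m n)
    (hE : a * m.factorization P + b * β' + (if 0 < α' ∧ ¬ P ∣ k then 1 else 0)
        + (if 0 < n.factorization P ∧ ¬ P ∣ l then 1 else 0)
      = a * α' + b * n.factorization P + (if 0 < m.factorization P ∧ ¬ P ∣ k then 1 else 0)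
        + (if 0 < β' ∧ ¬ P ∣ l then 1 else 0)) :
    m.factorization P ≤ α' := by
  by_contra! hlt
  obtain ⟨hβ, hij, hkl⟩ := mul_sub_eq_mul_sub_of_add_ite_eq ha hb hab hlt hE
  exact not_isProperRep_of_factorization hP hm hn (Nat.sub_pos_of_lt hlt) (by omega) (by omega)
    hij hkl h

lemma factorization_eq_of_totient_mul_eq {P m n m' n' : ℕ} (hP : P.Prime) (hk : k ≠ 0)
    (hl : l ≠ 0) (ha : 0 < a) (hb : 0 < b) (hab : 1 < Nat.gcd a b)
    (hm : m ∈ smoothNumbers (P + 1)) (hn : n ∈ smoothNumbers (P + 1))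
    (hm' : m' ∈ smoothNumbers (P + 1)) (hn' : n' ∈ smoothNumbers (P + 1))
    (hφ : φ (k * m ^ a) * φ (l * n' ^ b) = φ (k * m' ^ a) * φ (l * n ^ b))
    (h : IsProperRep k l a b m n) (h' : IsProperRep k l a b m' n') :
    m.factorization P = m'.factorization P ∧ n.factorization P = n'.factorization P := by
  have hφ0 : ∀ c x e, c ≠ 0 → x ≠ 0 → φ (c * x ^ e) ≠ 0 := fun c x e hc hx => by simp [hc, hx]
  have hE := congrArg (·.factorization P) hφ
  simp only [Nat.factorization_mul (hφ0 _ _ _ hk hm.1) (hφ0 _ _ _ hl hn'.1),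
    Nat.factorization_mul (hφ0 _ _ _ hk hm'.1) (hφ0 _ _ _ hl hn.1), Finsupp.add_apply] at hE
  have hφm := Nat.factorization_totient_mul_pow hP hk ha hm
  have hφm' := Nat.factorization_totient_mul_pow hP hk ha hm'
  have hφn := Nat.factorization_totient_mul_pow hP hl hb hn
  have hφn' := Nat.factorization_totient_mul_pow hP hl hb hn'
  have hvm : m.factorization P = m'.factorization P :=
    le_antisymm
      (factorization_le_of_isProperRep (β' := n'.factorization P) hP ha hb hab hm.1 hn.1 h
        (by omega))
      (factorization_le_of_isProperRep (β' := n.factorization P) hP ha hb hab hm'.1 hn'.1 h'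
        (by omega))
  have hb2 : 1 < b := hab.trans_le (Nat.le_of_dvd hb (Nat.gcd_dvd_right a b))
  rw [hvm] at hφm
  have hbn : b * n'.factorization P + (if 0 < n.factorization P ∧ ¬ P ∣ l then 1 else 0)
      = b * n.factorization P + (if 0 < n'.factorization P ∧ ¬ P ∣ l then 1 else 0) := by
    omega
  exact ⟨hvm, (Nat.eq_of_mul_add_eq_mul_add (by split_ifs <;> omega) (by split_ifs <;> omega)
    hbn).symm⟩

theorem eq_of_totient_mul_eq_of_mem_smoothNumbers (hk : k ≠ 0) (hl : l ≠ 0) (ha : 0 < a)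
    (hb : 0 < b) (hab : 1 < Nat.gcd a b) (B : ℕ) {m n m' n' : ℕ} (hm : m ∈ smoothNumbers B)
    (hn : n ∈ smoothNumbers B) (hm' : m' ∈ smoothNumbers B) (hn' : n' ∈ smoothNumbers B)
    (hφ : φ (k * m ^ a) * φ (l * n' ^ b) = φ (k * m' ^ a) * φ (l * n ^ b))
    (h : IsProperRep k l a b m n) (h' : IsProperRep k l a b m' n') : m = m' ∧ n = n' := by
  induction B generalizing m n m' n' with
  | zero =>
    simp only [Nat.smoothNumbers_zero, Set.mem_singleton_iff] at hm hn hm' hn'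
    exact ⟨hm.trans hm'.symm, hn.trans hn'.symm⟩
  | succ P ih =>
    by_cases hP : P.Prime
    swap
    · rw [Nat.smoothNumbers_succ hP] at hm hn hm' hn'
      exact ih hm hn hm' hn' hφ h h'
    obtain ⟨hvm, hvn⟩ :=
      factorization_eq_of_totient_mul_eq hP hk hl ha hb hab hm hn hm' hn' hφ h h'
    have hdecomp (x : ℕ) : P ^ x.factorization P * ordCompl[P] x = x :=
      Nat.ordProj_mul_ordCompl_eq_self x P
    have hφ₀ := Nat.totient_mul_pow_eq_of_mul_prime_pow (α := m'.factorization P)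
      (β := n'.factorization P) hP (Nat.not_dvd_ordCompl hP hm.1) (Nat.not_dvd_ordCompl hP hn.1)
      (Nat.not_dvd_ordCompl hP hm'.1) (Nat.not_dvd_ordCompl hP hn'.1)
      (by rwa [hdecomp m', hdecomp n', ← hvm, ← hvn, hdecomp m, hdecomp n])
    obtain ⟨h₁, h₂⟩ := ih (Nat.ordCompl_mem_smoothNumbers hP hm)
      (Nat.ordCompl_mem_smoothNumbers hP hn) (Nat.ordCompl_mem_smoothNumbers hP hm')
      (Nat.ordCompl_mem_smoothNumbers hP hn') hφ₀ (h.ordCompl hP hm.1 hn.1)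
      (h'.ordCompl hP hm'.1 hn'.1)
    exact ⟨by rw [← hdecomp m, ← hdecomp m', h₁, hvm], by rw [← hdecomp n, ← hdecomp n', h₂, hvn]⟩

end

theorem stmt_9_general (k l a b : ℕ) (hk : 0 < k) (hl : 0 < l) (ha : 0 < a) (hb : 0 < b)
    (hab : 1 < Nat.gcd a b) (r : ℚ) (m n m' n' : ℕ)
    (hm : 0 < m) (hn : 0 < n) (hm' : 0 < m') (hn' : 0 < n')
    (hrep : r = (Nat.totient (k * m ^ a) : ℚ) / (Nat.totient (l * n ^ b) : ℚ))
    (hproper : IsProperRep k l a b m n)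
    (hrep' : r = (Nat.totient (k * m' ^ a) : ℚ) / (Nat.totient (l * n' ^ b) : ℚ))
    (hproper' : IsProperRep k l a b m' n') :
    m = m' ∧ n = n' := by
  have hφ0 (c x e : ℕ) (hc : 0 < c) (hx : 0 < x) : (Nat.totient (c * x ^ e) : ℚ) ≠ 0 := by
    simp [hc.ne', hx.ne']
  have hφ : Nat.totient (k * m ^ a) * Nat.totient (l * n' ^ b)
      = Nat.totient (k * m' ^ a) * Nat.totient (l * n ^ b) := by
    have := hrep.symm.trans hrep'
    rw [div_eq_div_iff (hφ0 l n b hl hn) (hφ0 l n' b hl hn')] at this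
    exact_mod_cast this
  have hsmooth {x : ℕ} (hx : 0 < x) (hle : x ≤ m + n + m' + n') :
      x ∈ Nat.smoothNumbers (m + n + m' + n' + 1) :=
    Nat.mem_smoothNumbers_of_lt hx (Nat.lt_succ_of_le hle)
  exact eq_of_totient_mul_eq_of_mem_smoothNumbers hk.ne' hl.ne' ha hb hab _
    (hsmooth hm (by omega)) (hsmooth hn (by omega)) (hsmooth hm' (by omega))
    (hsmooth hn' (by omega)) hφ hproper hproper'

theorem stmt_9 (k l a b : ℕ) (hk : 0 < k) (hl : 0 < l) (ha : 0 < a) (hb : 0 < b)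
    (hab : 1 < Nat.gcd a b) (r : ℚ) (hr : 0 < r) (m n m' n' : ℕ)
    (hm : 0 < m) (hn : 0 < n) (hm' : 0 < m') (hn' : 0 < n')
    (hrep : r = (Nat.totient (k * m ^ a) : ℚ) / (Nat.totient (l * n ^ b) : ℚ))
    (hproper : IsProperRep k l a b m n)
    (hrep' : r = (Nat.totient (k * m' ^ a) : ℚ) / (Nat.totient (l * n' ^ b) : ℚ))
    (hproper' : IsProperRep k l a b m' n') :
    m = m' ∧ n = n' :=
  stmt_9_general k l a b hk hl ha hb hab r m n m' n' hm hn hm' hn' hrep hproper hrep' hproper'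
end
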